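/- arXiv:1612.07727 — 2 statements merged into one kernel-verified Lean document; each statement's English description precedes it below -/
import Mathlib

section
/- (Nash iteration lemma) Let c₁, c₂, β > 0 and p ≥ 2. Let w be positive, nondecreasing and continuous on [0,∞), and let u be positive and continuously differentiable on [0,∞) satisfying u'(t) ≤ −(c₁/p) t^{p−2} u(t)^{1+βp} / w(t)^{βp} + c₂ p u(t) for all t ≥ 0. Then there exists a constant K = K(c₁,β) > 0 such that for every δ ∈ (0,1] and all t ≥ 0, t^{(p−1)/(βp)} u(t) ≤ (K p²/δ)^{1/(βp)} e^{c₂ δ t / p} w(t). -/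
/-!
With `a = c₂ β p²` and `r = β p`, the differential inequality says exactly that
`g s = exp (a s) * u s ^ (-r)` satisfies `g' s ≥ β c₁ exp (a s) s ^ (p - 2) / w s ^ r`: the
exponential weight is chosen so that the `c₂` term cancels. Integrating over `[(1 - ε) t, t]`,
where `w` is largest at `t`, and discarding `g ((1 - ε) t) > 0` gives
`β c₁ ε (1 - ε) ^ (p - 2) t ^ (p - 1) u t ^ r ≤ exp (a ε t) w t ^ r`. For `ε = δ / p²`
Bernoulli's inequality gives `(1 - ε) ^ (p - 2) ≥ 1 / 2`, so `K = 2 / (β c₁)` works after taking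
`r`-th roots.
-/

open Real Set

lemma half_le_one_sub_rpow_sub_two {ε p : ℝ} (hp : 2 ≤ p) (hε : 0 ≤ ε) (hεp : ε * p ^ 2 ≤ 1) :
    1 / 2 ≤ (1 - ε) ^ (p - 2) := by
  have hpε : p * ε ≤ 1 / 2 := by nlinarith
  calc 1 / 2 ≤ 1 + p * -ε := by linarith
    _ ≤ (1 + -ε) ^ p := one_add_mul_self_le_rpow_one_add (by nlinarith) (by linarith)
    _ ≤ (1 - ε) ^ (p - 2) := by
      rw [← sub_eq_add_neg]
      exact rpow_le_rpow_of_exponent_ge (by nlinarith) (by linarith) (by linarith)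

lemma rpow_one_div_mul_le_of_mul_rpow_le {x y A B r : ℝ} (hr : 0 < r) (hx : 0 ≤ x)
    (hy : 0 ≤ y) (hA : 0 ≤ A) (hB : 0 ≤ B) (h : x * y ^ r ≤ A * B ^ r) :
    x ^ (1 / r) * y ≤ A ^ (1 / r) * B := by
  rwa [← rpow_le_rpow_iff (by positivity) (by positivity) hr, mul_rpow (by positivity) hy,
    mul_rpow (by positivity) hB, one_div, rpow_inv_rpow hx hr.ne', rpow_inv_rpow hA hr.ne']

lemma mul_sub_le_sub_of_hasDerivAt {f f' : ℝ → ℝ} {a b C : ℝ} (hab : a ≤ b)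
    (hf : ∀ x ∈ Icc a b, HasDerivAt f (f' x) x) (hC : ∀ x ∈ Icc a b, C ≤ f' x) :
    C * (b - a) ≤ f b - f a :=
  (convex_Icc a b).mul_sub_le_image_sub_of_le_deriv
    (fun x hx => (hf x hx).continuousAt.continuousWithinAt)
    (fun x hx => (hf x (interior_subset hx)).differentiableAt.differentiableWithinAt)
    (fun x hx => (hf x (interior_subset hx)).deriv ▸ hC x (interior_subset hx))
    a (left_mem_Icc.2 hab) b (right_mem_Icc.2 hab) hab

lemma hasDerivAt_exp_mul_mul_rpow_neg {u : ℝ → ℝ} {u' a r s : ℝ} (hu : HasDerivAt u u' s)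
    (hs : 0 < u s) :
    HasDerivAt (fun x => exp (a * x) * u x ^ (-r))
      (exp (a * s) * (a * u s ^ (-r) - r * u' * u s ^ (-r - 1))) s := by
  refine (((hasDerivAt_id' s).const_mul a).exp.mul
    (hu.rpow_const (p := -r) (Or.inl hs.ne'))).congr_deriv ?_
  ring

lemma le_sub_of_le_nash_rhs {c₁ c₂ β p S W x y : ℝ} (hp : 0 < p) (hβ : 0 ≤ β) (hx : 0 < x)
    (hy : y ≤ -(c₁ / p) * S * x ^ (1 + β * p) / W + c₂ * p * x) :
    β * c₁ * S / W ≤ c₂ * β * p ^ 2 * x ^ (-(β * p)) - β * p * y * x ^ (-(β * p) - 1) := by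
  have hmul := mul_le_mul_of_nonneg_right hy
    (by positivity : 0 ≤ β * p * x ^ (-(β * p) - 1))
  have hcancel : x ^ (1 + β * p) * x ^ (-(β * p) - 1) = 1 := by
    rw [← rpow_add hx, show 1 + β * p + (-(β * p) - 1) = 0 by ring, rpow_zero]
  have hpow : x * x ^ (-(β * p) - 1) = x ^ (-(β * p)) := by
    rw [mul_comm, ← rpow_add_one hx.ne', sub_add_cancel]
  have hexpand : (-(c₁ / p) * S * x ^ (1 + β * p) / W + c₂ * p * x) * (β * p * x ^ (-(β * p) - 1))
      = -(β * c₁ * S / W) * (x ^ (1 + β * p) * x ^ (-(β * p) - 1))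
        + c₂ * β * p ^ 2 * (x * x ^ (-(β * p) - 1)) := by
    field_simp
  rw [hexpand, hcancel, hpow] at hmul
  linarith

section

variable {c₁ c₂ β p : ℝ} {u u' w : ℝ → ℝ}

lemma nash_weight_growth {s₀ t : ℝ} (hc₁ : 0 ≤ c₁) (hc₂ : 0 ≤ c₂) (hβ : 0 ≤ β) (hp : 2 ≤ p)
    (hu : ∀ s, 0 ≤ s → 0 < u s) (hw : ∀ s, 0 ≤ s → 0 < w s) (hwmono : MonotoneOn w (Ici 0))
    (hu' : ∀ s, 0 ≤ s → HasDerivAt u (u' s) s)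
    (hineq : ∀ s, 0 ≤ s →
      u' s ≤ -(c₁ / p) * s ^ (p - 2) * u s ^ (1 + β * p) / w s ^ (β * p) + c₂ * p * u s)
    (hs₀ : 0 < s₀) (hs₀t : s₀ ≤ t) :
    β * c₁ * exp (c₂ * β * p ^ 2 * s₀) * s₀ ^ (p - 2) / w t ^ (β * p) * (t - s₀)
      ≤ exp (c₂ * β * p ^ 2 * t) * u t ^ (-(β * p))
        - exp (c₂ * β * p ^ 2 * s₀) * u s₀ ^ (-(β * p)) := by
  set a := c₂ * β * p ^ 2
  set r := β * p
  refine mul_sub_le_sub_of_hasDerivAt (f := fun x => exp (a * x) * u x ^ (-r)) hs₀t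
    (fun s hs => hasDerivAt_exp_mul_mul_rpow_neg (hu' s (hs₀.le.trans hs.1))
      (hu s (hs₀.le.trans hs.1))) ?_
  rintro s ⟨hs₀s, hst⟩
  have hs : 0 ≤ s := hs₀.le.trans hs₀s
  have := hw s hs
  have := hw t (hs.trans hst)
  calc β * c₁ * exp (a * s₀) * s₀ ^ (p - 2) / w t ^ r
      = exp (a * s₀) * (β * c₁ * s₀ ^ (p - 2) / w t ^ r) := by ring
    _ ≤ exp (a * s) * (β * c₁ * s ^ (p - 2) / w s ^ r) := by
      gcongr
      exact hwmono hs (hs.trans hst) hst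
    _ ≤ exp (a * s) * (a * u s ^ (-r) - r * u' s * u s ^ (-r - 1)) := by
      gcongr
      exact le_sub_of_le_nash_rhs (by linarith) hβ (hu s hs) (hineq s hs)

lemma nash_rpow_bound_of_lt_one {t ε : ℝ} (hc₁ : 0 ≤ c₁) (hc₂ : 0 ≤ c₂) (hβ : 0 ≤ β) (hp : 2 ≤ p)
    (hu : ∀ s, 0 ≤ s → 0 < u s) (hw : ∀ s, 0 ≤ s → 0 < w s) (hwmono : MonotoneOn w (Ici 0))
    (hu' : ∀ s, 0 ≤ s → HasDerivAt u (u' s) s)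
    (hineq : ∀ s, 0 ≤ s →
      u' s ≤ -(c₁ / p) * s ^ (p - 2) * u s ^ (1 + β * p) / w s ^ (β * p) + c₂ * p * u s)
    (ht : 0 < t) (hε₀ : 0 < ε) (hε₁ : ε < 1) :
    β * c₁ * ε * (1 - ε) ^ (p - 2) * t ^ (p - 1) * u t ^ (β * p)
      ≤ exp (c₂ * β * p ^ 2 * ε * t) * w t ^ (β * p) := by
  set s₀ := (1 - ε) * t with hs₀_def
  have hs₀ : 0 < s₀ := by positivity
  have hgrowth := nash_weight_growth hc₁ hc₂ hβ hp hu hw hwmono hu' hineq hs₀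
    (show s₀ ≤ t by nlinarith)
  have hg₀ : 0 < exp (c₂ * β * p ^ 2 * s₀) * u s₀ ^ (-(β * p)) := by
    have := hu s₀ hs₀.le
    positivity
  replace hgrowth := hgrowth.trans (sub_le_self _ hg₀.le)
  set a := c₂ * β * p ^ 2
  have hexp : exp (a * t) = exp (a * s₀) * exp (a * ε * t) := by
    rw [← exp_add, hs₀_def]
    ring_nf
  have hpow : s₀ ^ (p - 2) = (1 - ε) ^ (p - 2) * t ^ (p - 2) := mul_rpow (by linarith) ht.le
  have hneg : u t ^ (-(β * p)) = (u t ^ (β * p))⁻¹ := rpow_neg (hu t ht.le).le _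
  rw [hexp, hpow, hneg, show t - s₀ = ε * t by ring] at hgrowth
  rw [show t ^ (p - 1) = t ^ (p - 2) * t by rw [← rpow_add_one ht.ne']; ring_nf]
  have := hu t ht.le
  have := hw t ht.le
  field_simp at hgrowth
  linear_combination hgrowth

lemma nash_rpow_bound {t δ : ℝ} (hc₁ : 0 < c₁) (hc₂ : 0 ≤ c₂) (hβ : 0 < β) (hp : 2 ≤ p)
    (hu : ∀ s, 0 ≤ s → 0 < u s) (hw : ∀ s, 0 ≤ s → 0 < w s) (hwmono : MonotoneOn w (Ici 0))
    (hu' : ∀ s, 0 ≤ s → HasDerivAt u (u' s) s)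
    (hineq : ∀ s, 0 ≤ s →
      u' s ≤ -(c₁ / p) * s ^ (p - 2) * u s ^ (1 + β * p) / w s ^ (β * p) + c₂ * p * u s)
    (ht : 0 < t) (hδ₀ : 0 < δ) (hδ₁ : δ ≤ 1) :
    t ^ (p - 1) * u t ^ (β * p)
      ≤ 2 / (β * c₁) * p ^ 2 / δ * exp (c₂ * β * δ * t) * w t ^ (β * p) := by
  have hp₀ : 0 < p := by linarith
  have hεp : δ / p ^ 2 * p ^ 2 = δ := div_mul_cancel₀ δ (by positivity)
  have hbound := nash_rpow_bound_of_lt_one (ε := δ / p ^ 2) hc₁.le hc₂ hβ.le hp hu hw hwmono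
    hu' hineq ht (by positivity) (by rw [div_lt_one (by positivity)]; nlinarith)
  have hhalf := half_le_one_sub_rpow_sub_two hp (by positivity) (hεp.trans_le hδ₁)
  rw [show c₂ * β * p ^ 2 * (δ / p ^ 2) * t = c₂ * β * δ * t by field_simp] at hbound
  set X := t ^ (p - 1) * u t ^ (β * p)
  have hX : 0 ≤ X := by have := hu t ht.le; positivity
  calc X = 2 * p ^ 2 / (β * c₁ * δ) * (β * c₁ * (δ / p ^ 2) * (1 / 2) * X) := by field_simp
    _ ≤ 2 * p ^ 2 / (β * c₁ * δ) * (β * c₁ * (δ / p ^ 2) * (1 - δ / p ^ 2) ^ (p - 2) * X) := by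
      gcongr
    _ ≤ 2 * p ^ 2 / (β * c₁ * δ) * (exp (c₂ * β * δ * t) * w t ^ (β * p)) := by
      gcongr 2 * p ^ 2 / (β * c₁ * δ) * ?_
      linear_combination hbound
    _ = 2 / (β * c₁) * p ^ 2 / δ * exp (c₂ * β * δ * t) * w t ^ (β * p) := by field_simp

end

/-- Nash iteration lemma (Stroock, Lemma I.1.14): the constant `K` depends
only on `c₁` and `β`. -/
theorem nash_iteration (c₁ β : ℝ) (hc₁ : 0 < c₁) (hβ : 0 < β) :
    ∃ K > (0 : ℝ), ∀ (c₂ p : ℝ) (u u' w : ℝ → ℝ),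
      0 < c₂ → 2 ≤ p →
      (∀ t, 0 ≤ t → 0 < u t) →
      (∀ t, 0 ≤ t → 0 < w t) →
      ContinuousOn w (Set.Ici 0) →
      MonotoneOn w (Set.Ici 0) →
      (∀ t, 0 ≤ t → HasDerivAt u (u' t) t) →
      ContinuousOn u' (Set.Ici 0) →
      (∀ t, 0 ≤ t →
        u' t ≤ -(c₁ / p) * t ^ (p - 2) * u t ^ (1 + β * p) / w t ^ (β * p)
                + c₂ * p * u t) →
      ∀ δ : ℝ, δ ∈ Set.Ioc (0 : ℝ) 1 → ∀ t, 0 ≤ t →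
        t ^ ((p - 1) / (β * p)) * u t ≤
          (K * p ^ 2 / δ) ^ (1 / (β * p)) * Real.exp (c₂ * δ * t / p) * w t := by
  refine ⟨2 / (β * c₁), by positivity, ?_⟩
  intro c₂ p u u' w hc₂ hp hu hw _ hwmono hu' _ hineq δ ⟨hδ₀, hδ₁⟩ t ht
  have hp₀ : 0 < p := by linarith
  have hwt := hw t ht
  rcases ht.eq_or_lt with rfl | ht
  · have : 0 < p - 1 := by linarith
    rw [zero_rpow (by positivity), zero_mul]
    positivity
  have hexp : (exp (c₂ * δ * t / p) * w t) ^ (β * p) = exp (c₂ * β * δ * t) * w t ^ (β * p) := by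
    rw [mul_rpow (exp_pos _).le hwt.le, ← exp_mul]
    field_simp
  have hpow : t ^ ((p - 1) / (β * p)) = (t ^ (p - 1)) ^ (1 / (β * p)) := by
    rw [← rpow_mul ht.le, mul_one_div]
  rw [hpow, mul_assoc _ (exp _)]
  refine rpow_one_div_mul_le_of_mul_rpow_le (by positivity) (by positivity) (hu t ht.le).le
    (by positivity) (by positivity) ?_
  rw [hexp, ← mul_assoc]
  exact nash_rpow_bound hc₁ hc₂.le hβ hp hu hw hwmono hu' hineq ht hδ₀ hδ₁
end

section
/- Let G : [1/2, 1] → (−∞, 0) be continuously differentiable with G < 0, and suppose G'(t) ≥ −C₁ + C₂ G(t)² for all t ∈ [1/2, 1], where C₁ > 0 and C₂ ∈ (0,1]. Then G(1) ≥ min{ −C₁ − 2√(C₁/C₂), −8/(3C₂) }. -/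
/-! Put `a = √(C₁/C₂)`, so that `C₁ = C₂ a²`. If `G 1 ≥ -2a` there is nothing to prove.
Otherwise `G ≤ -2a` on all of `[1/2, 1]`: at the level `-2a` the inequality gives
`G' ≥ 3 C₁ > 0`, so going backwards in time `G` can never climb above it. Below that level
`C₁ ≤ C₂ G² / 4`, hence `G' ≥ (3/4) C₂ G²`, i.e. `(-1/G)' ≥ (3/4) C₂`. Integrating over `[1/2, 1]`
and using `G (1/2) < 0` gives `-1/G 1 > 3 C₂ / 8`, that is `G 1 > -8 / (3 C₂)`. -/

open Set

theorem image_le_of_right_le_of_deriv_pos_boundary {f f' : ℝ → ℝ} {a b c : ℝ}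
    (hf : ∀ x ∈ Icc a b, HasDerivAt f (f' x) x) (hb : f b ≤ c)
    (bound : ∀ x ∈ Ioc a b, f x = c → 0 < f' x) : ∀ x ∈ Icc a b, f x ≤ c := by
  -- time reversal turns this into the forward fencing theorem for `x ↦ f (-x)` on `[-b, -a]`
  have hrev : ∀ x ∈ Icc (-b) (-a), HasDerivAt (fun y => f (-y)) (-f' (-x)) x := fun x hx =>
    ((hf (-x) ⟨le_neg.mp hx.2, neg_le.mp hx.1⟩).comp x (hasDerivAt_neg x)).congr_deriv
      (mul_neg_one _)
  intro x hx
  simpa using image_le_of_deriv_right_lt_deriv_boundary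
    (fun y hy => (hrev y hy).continuousAt.continuousWithinAt)
    (fun y hy => (hrev y (Ico_subset_Icc_self hy)).hasDerivWithinAt)
    (by simpa using hb) (fun _ => hasDerivAt_const _ c)
    (fun y hy hyc => neg_neg_of_pos (bound (-y) ⟨lt_neg.mp hy.2, neg_le.mp hy.1⟩ hyc))
    ⟨neg_le_neg hx.2, neg_le_neg hx.1⟩

theorem mul_sub_le_inv_sub_inv_of_mul_sq_le_deriv {G G' : ℝ → ℝ} {a b κ : ℝ} (hab : a ≤ b)
    (hG : ∀ x ∈ Icc a b, HasDerivAt G (G' x) x) (hne : ∀ x ∈ Icc a b, G x ≠ 0)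
    (hineq : ∀ x ∈ Icc a b, κ * G x ^ 2 ≤ G' x) : κ * (b - a) ≤ (G a)⁻¹ - (G b)⁻¹ := by
  have hinv : ∀ x ∈ Icc a b, HasDerivAt (fun y => -(G y)⁻¹) (G' x / G x ^ 2) x := fun x hx =>
    ((hG x hx).inv (hne x hx)).neg.congr_deriv (by ring)
  have key := (convex_Icc a b).mul_sub_le_image_sub_of_le_deriv (C := κ)
    (fun x hx => (hinv x hx).continuousAt.continuousWithinAt)
    (fun x hx => (hinv x (interior_subset hx)).differentiableAt.differentiableWithinAt)
    (fun x hx => by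
      have hx' := interior_subset hx
      rw [(hinv x hx').deriv, le_div_iff₀ (sq_pos_of_ne_zero (hne x hx'))]
      exact hineq x hx')
    a (left_mem_Icc.mpr hab) b (right_mem_Icc.mpr hab) hab
  linarith

theorem riccati_lower_bound_general (G G' : ℝ → ℝ) (C₁ C₂ : ℝ)
    (hC₁ : 0 < C₁) (hC₂ : C₂ ∈ Set.Ioc (0 : ℝ) 1)
    (hderiv : ∀ t ∈ Set.Icc (1/2 : ℝ) 1, HasDerivAt G (G' t) t)
    (hineq : ∀ t ∈ Set.Icc (1/2 : ℝ) 1, G' t ≥ -C₁ + C₂ * G t ^ 2) :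
    G 1 ≥ min (-C₁ - 2 * Real.sqrt (C₁ / C₂)) (-8 / (3 * C₂)) := by
  obtain ⟨hC₂, -⟩ := hC₂
  set a := Real.sqrt (C₁ / C₂)
  have ha : C₂ * a ^ 2 = C₁ := by
    rw [Real.sq_sqrt (by positivity)]; field_simp
  have ha₀ : 0 < a := Real.sqrt_pos.mpr (by positivity)
  rcases le_or_gt (-2 * a) (G 1) with h | h
  · exact (min_le_left _ _).trans (by linarith)
  have hbelow : ∀ t ∈ Icc (1/2 : ℝ) 1, G t ≤ -2 * a :=
    image_le_of_right_le_of_deriv_pos_boundary hderiv h.le fun t ht hGt => by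
      have := hineq t (Ioc_subset_Icc_self ht)
      rw [hGt] at this
      nlinarith
  have hriccati : ∀ t ∈ Icc (1/2 : ℝ) 1, 3 / 4 * C₂ * G t ^ 2 ≤ G' t := fun t ht => by
    have hsq : 4 * a ^ 2 ≤ G t ^ 2 := by nlinarith [hbelow t ht]
    nlinarith [hineq t ht]
  have hneg : ∀ t ∈ Icc (1/2 : ℝ) 1, G t < 0 := fun t ht => by linarith [hbelow t ht]
  have hgrowth := mul_sub_le_inv_sub_inv_of_mul_sq_le_deriv (by norm_num) hderiv
    (fun t ht => (hneg t ht).ne) hriccati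
  have hG₁ := hneg 1 (by norm_num)
  have hG₀ := inv_lt_zero.mpr (hneg (1/2) (by norm_num))
  refine (min_le_right _ _).trans ?_
  rw [div_le_iff₀ (by positivity)]
  nlinarith [inv_mul_cancel₀ hG₁.ne]

/-- Riccati-type comparison: if `G < 0` on `[1/2,1]` and
`G' ≥ -C₁ + C₂ G²`, with `C₁ > 0`, `C₂ ∈ (0,1]`, then
`G(1) ≥ min (-C₁ - 2√(C₁/C₂)) (-8/(3C₂))`. -/
theorem riccati_lower_bound (G G' : ℝ → ℝ) (C₁ C₂ : ℝ)
    (hC₁ : 0 < C₁) (hC₂ : C₂ ∈ Set.Ioc (0 : ℝ) 1)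
    (hneg : ∀ t ∈ Set.Icc (1/2 : ℝ) 1, G t < 0)
    (hderiv : ∀ t ∈ Set.Icc (1/2 : ℝ) 1, HasDerivAt G (G' t) t)
    (hcont : ContinuousOn G' (Set.Icc (1/2 : ℝ) 1))
    (hineq : ∀ t ∈ Set.Icc (1/2 : ℝ) 1, G' t ≥ -C₁ + C₂ * G t ^ 2) :
    G 1 ≥ min (-C₁ - 2 * Real.sqrt (C₁ / C₂)) (-8 / (3 * C₂)) :=
  riccati_lower_bound_general G G' C₁ C₂ hC₁ hC₂ hderiv hineq
end
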